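/- A De Morgan clone C with DMA ⊆ C contains a unary non-harmonious function if and only if C contains the unary function t_{n↦n} or the unary function t_{b↦b}. -/
import Mathlib


set_option autoImplicit false

/-- The four truth values of the Belnap–Dunn logic. -/
inductive DM4 : Type
  | t
  | f
  | n
  | b
deriving DecidableEq

namespace DM4

/-- De Morgan negation. -/
def neg : DM4 → DM4
  | t => f
  | f => t
  | n => n
  | b => b

/-- Conflation. -/
def conf : DM4 → DM4
  | t => t
  | f => f
  | n => b
  | b => n

/-- Meet in the truth order. -/
def meet : DM4 → DM4 → DM4
  | f, _ => f
  | _, f => f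
  | t, y => y
  | x, t => x
  | n, n => n
  | b, b => b
  | n, b => f
  | b, n => f

/-- Join in the truth order. -/
def join : DM4 → DM4 → DM4
  | t, _ => t
  | _, t => t
  | f, y => y
  | x, f => x
  | n, n => n
  | b, b => b
  | n, b => t
  | b, n => t

/-- Meet in the information order (⊗). -/
def imeet : DM4 → DM4 → DM4
  | n, _ => n
  | _, n => n
  | b, y => y
  | x, b => x
  | t, t => t
  | f, f => f
  | t, f => n
  | f, t => n

/-- Join in the information order (⊕). -/
def ijoin : DM4 → DM4 → DM4
  | b, _ => b
  | _, b => b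
  | n, y => y
  | x, n => x
  | t, t => t
  | f, f => f
  | t, f => b
  | f, t => b

/-- The truth order: least element `f`, greatest element `t`, with `n`, `b` incomparable. -/
def tle (x y : DM4) : Prop := x = y ∨ x = f ∨ y = t

/-- The information order: least element `n`, greatest element `b`, with `t`, `f` incomparable. -/
def ile (x y : DM4) : Prop := x = y ∨ x = n ∨ y = b

/-- □: maps t to t and everything else to f. -/
def box : DM4 → DM4
  | t => t
  | _ => f

/-- ◇: maps f to f and everything else to t. -/
def diamond : DM4 → DM4
  | f => f
  | _ => t

/-- Δ: maps t, b to t and n, f to f. -/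
def delta : DM4 → DM4
  | t => t
  | b => t
  | _ => f

/-- ∇: maps t, n to t and b, f to f. -/
def nabla : DM4 → DM4
  | t => t
  | n => t
  | _ => f

/-- id_{b↦n}: maps b to n and fixes t, f, n. -/
def idbn : DM4 → DM4
  | b => n
  | x => x

/-- id_{n↦b}: maps n to b and fixes t, f, b. -/
def idnb : DM4 → DM4
  | n => b
  | x => x

/-- id_{n↦t}: maps n to t and fixes t, f, b. -/
def idnt : DM4 → DM4
  | n => t
  | x => x

/-- id_{b↦t}: maps b to t and fixes t, f, n. -/
def idbt : DM4 → DM4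
  | b => t
  | x => x

/-- t_{n↦n}: maps n to n and everything else to t. -/
def tnn : DM4 → DM4
  | n => n
  | _ => t

/-- t_{b↦b}: maps b to b and everything else to t. -/
def tbb : DM4 → DM4
  | b => b
  | _ => t

/-- The binary function pbp²₁. -/
def pbp1 : DM4 → DM4 → DM4
  | t, t => t | t, f => f | t, n => f | t, b => b
  | f, t => t | f, f => f | f, n => f | f, b => b
  | n, t => t | n, f => f | n, n => n | n, b => b
  | b, t => b | b, f => f | b, n => f | b, b => b

/-- The binary function pbp²₂. -/
def pbp2 : DM4 → DM4 → DM4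
  | t, t => t | t, f => f | t, n => n | t, b => f
  | f, t => t | f, f => f | f, n => n | f, b => f
  | n, t => n | n, f => f | n, n => n | n, b => f
  | b, t => t | b, f => f | b, n => n | b, b => b

/-- The binary function mnh²₁. -/
def mnh1 : DM4 → DM4 → DM4
  | t, t => f | t, f => f | t, n => n | t, b => b
  | f, t => f | f, f => f | f, n => n | f, b => b
  | n, t => f | n, f => f | n, n => n | n, b => f
  | b, t => f | b, f => f | b, n => n | b, b => b

/-- The binary function mnh²₂. -/
def mnh2 : DM4 → DM4 → DM4
  | t, t => f | t, f => f | t, n => n | t, b => b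
  | f, t => f | f, f => f | f, n => n | f, b => b
  | n, t => f | n, f => f | n, n => n | n, b => b
  | b, t => f | b, f => f | b, n => f | b, b => b

/-- The binary function mhnp². -/
def mhnp2 : DM4 → DM4 → DM4
  | t, _ => t
  | f, _ => t
  | n, b => f
  | n, _ => n
  | b, n => f
  | b, _ => b

/-- The binary function mnp²₁. -/
def mnp1 : DM4 → DM4 → DM4
  | t, b => b
  | t, _ => t
  | f, b => b
  | f, _ => t
  | n, b => f
  | n, _ => n
  | b, n => f
  | b, _ => b

/-- The binary function mnp²₂. -/
def mnp2 : DM4 → DM4 → DM4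
  | t, _ => t
  | f, _ => t
  | n, _ => n
  | b, n => f
  | b, _ => b

/-- The binary function mnp²₃. -/
def mnp3 : DM4 → DM4 → DM4
  | t, n => n
  | t, _ => t
  | f, n => n
  | f, _ => t
  | n, b => f
  | n, _ => n
  | b, n => f
  | b, _ => b

/-- The binary function mnp²₄. -/
def mnp4 : DM4 → DM4 → DM4
  | t, _ => t
  | f, _ => t
  | n, b => f
  | n, _ => n
  | b, _ => b

/-- The ternary function mhnp³. -/
def mhnp3 : DM4 → DM4 → DM4 → DM4
  | _, t, _ => f
  | _, f, _ => f
  | t, n, _ => n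
  | f, n, _ => f
  | b, n, _ => f
  | n, n, b => f
  | n, n, _ => n
  | t, b, _ => b
  | f, b, _ => f
  | n, b, _ => f
  | b, b, n => f
  | b, b, _ => b

/-- The set of designated values. -/
def Des : Set DM4 := {t, b}

/-- Designatedness as a Boolean predicate. -/
def des : DM4 → Bool
  | t => true
  | b => true
  | _ => false

/-- The protoimplication →_{t-max}. -/
def tmax (x y : DM4) : DM4 :=
  match des x, des y with
  | true, false => n
  | _, _ => t

/-- The protoimplication →_{i-max}. -/
def imax (x y : DM4) : DM4 :=
  match des x, des y with
  | true, false => f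
  | _, _ => b

/-- The protoimplication ↔_{t-min}. -/
def tmin (x y : DM4) : DM4 := if x = y then b else f

/-- The protoimplication ↔_{i-min}. -/
def imin (x y : DM4) : DM4 := if x = y then t else n

/-- A binary operation is a protoimplication if it satisfies Reflexivity and Modus Ponens
with respect to the designated set {t, b}. -/
def IsProtoimplication (r : DM4 → DM4 → DM4) : Prop :=
  (∀ a : DM4, r a a ∈ Des) ∧ ∀ a c : DM4, a ∈ Des → r a c ∈ Des → c ∈ Des

/-- `DMFun k` is the type of De Morgan functions of arity `k + 1` (arities are positive). -/
abbrev DMFun (k : ℕ) : Type := (Fin (k + 1) → DM4) → DM4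

/-- Membership in the clone generated by the family of operations `S`
(`S k` is the set of generators of arity `k + 1`). -/
inductive InClone (S : ∀ k : ℕ, Set (DMFun k)) : ∀ k : ℕ, DMFun k → Prop
  | base {k : ℕ} {g : DMFun k} : g ∈ S k → InClone S k g
  | proj {k : ℕ} (i : Fin (k + 1)) : InClone S k (fun x => x i)
  | comp {k m : ℕ} {g : DMFun m} {h : Fin (m + 1) → DMFun k} :
      InClone S m g → (∀ i, InClone S k (h i)) →
      InClone S k (fun x => g (fun i => h i x))

/-- A family of sets of De Morgan functions is a clone if it contains all projections
and is closed under composition. -/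
structure IsClone (C : ∀ k : ℕ, Set (DMFun k)) : Prop where
  proj : ∀ (k : ℕ) (i : Fin (k + 1)), (fun x => x i) ∈ C k
  comp : ∀ (k m : ℕ) (g : DMFun m) (h : Fin (m + 1) → DMFun k),
      g ∈ C m → (∀ i, h i ∈ C k) → (fun x => g (fun i => h i x)) ∈ C k

/-- The generating family consisting of a single unary operation. -/
def op1 (g : DM4 → DM4) : ∀ k : ℕ, Set (DMFun k)
  | 0 => {fun x => g (x 0)}
  | _ + 1 => ∅

/-- The generating family consisting of a single binary operation. -/
def op2 (g : DM4 → DM4 → DM4) : ∀ k : ℕ, Set (DMFun k)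
  | 1 => {fun x => g (x 0) (x 1)}
  | _ => ∅

/-- The generating family consisting of a single ternary operation. -/
def op3 (g : DM4 → DM4 → DM4 → DM4) : ∀ k : ℕ, Set (DMFun k)
  | 2 => {fun x => g (x 0) (x 1) (x 2)}
  | _ => ∅

/-- Union of two families of operations. -/
def funion (S T : ∀ k : ℕ, Set (DMFun k)) : ∀ k : ℕ, Set (DMFun k) := fun k => S k ∪ T k

infixr:65 " ⊹ " => funion

/-- The generators of DLat: ∧, ∨, t, f (constants as unary constant functions). -/
def DLatGen : ∀ k : ℕ, Set (DMFun k) :=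
  op2 meet ⊹ op2 join ⊹ op1 (fun _ => t) ⊹ op1 (fun _ => f)

/-- The generators of DMA: ∧, ∨, t, f, −. -/
def DMAGen : ∀ k : ℕ, Set (DMFun k) := DLatGen ⊹ op1 neg

/-- The generators of BiLat: ∧, ∨, t, f, ⊗, ⊕, n, b. -/
def BiLatGen : ∀ k : ℕ, Set (DMFun k) :=
  DLatGen ⊹ op2 imeet ⊹ op2 ijoin ⊹ op1 (fun _ => n) ⊹ op1 (fun _ => b)

/-- A De Morgan function is harmonious if it commutes with conflation. -/
def Harmonious {k : ℕ} (g : DMFun k) : Prop :=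
  ∀ x : Fin (k + 1) → DM4, g (fun i => conf (x i)) = conf (g x)

/-- A De Morgan function is positive if it is monotone in the componentwise truth order. -/
def Positive {k : ℕ} (g : DMFun k) : Prop :=
  ∀ x y : Fin (k + 1) → DM4, (∀ i, tle (x i) (y i)) → tle (g x) (g y)

/-- A De Morgan function is persistent if it is monotone in the componentwise
information order. -/
def Persistent {k : ℕ} (g : DMFun k) : Prop :=
  ∀ x y : Fin (k + 1) → DM4, (∀ i, ile (x i) (y i)) → ile (g x) (g y)

/-- A De Morgan function preserves a subset X of DM4 if it maps tuples from X into X. -/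
def Preserves {k : ℕ} (g : DMFun k) (X : Set DM4) : Prop :=
  ∀ x : Fin (k + 1) → DM4, (∀ i, x i ∈ X) → g x ∈ X

def B2 : Set DM4 := {t, f}
def K3 : Set DM4 := {t, n, f}
def P3 : Set DM4 := {t, b, f}

/-- A unary operation as a De Morgan function. -/
def toF1 (g : DM4 → DM4) : DMFun 0 := fun x => g (x 0)

/-- A binary operation as a De Morgan function. -/
def toF2 (g : DM4 → DM4 → DM4) : DMFun 1 := fun x => g (x 0) (x 1)

/-- A ternary operation as a De Morgan function. -/
def toF3 (g : DM4 → DM4 → DM4 → DM4) : DMFun 2 := fun x => g (x 0) (x 1) (x 2)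

/-- The clone generated by a family of operations, as a family of sets. -/
def CloneOf (S : ∀ k : ℕ, Set (DMFun k)) : ∀ k : ℕ, Set (DMFun k) :=
  fun k => {g | InClone S k g}

/-- Inclusion of families of operations. -/
def CloneLE (C D : ∀ k : ℕ, Set (DMFun k)) : Prop := ∀ k : ℕ, C k ⊆ D k



instance : Fintype DM4 where
  elems := {t, f, n, b}
  complete := by intro x; cases x <;> simp

/-- Unary term language over an abstract unary function `h` and the DMA operations. -/
inductive Tm : Type
  | var | ct | cf
  | ng (e : Tm)
  | mt (e₁ e₂ : Tm)
  | jn (e₁ e₂ : Tm)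
  | ap (e : Tm)

/-- Evaluation of a term as a unary De Morgan function. -/
def ev (h : DM4 → DM4) : Tm → DM4 → DM4
  | .var => fun a => a
  | .ct => fun _ => t
  | .cf => fun _ => f
  | .ng e => fun a => neg (ev h e a)
  | .mt e₁ e₂ => fun a => meet (ev h e₁ a) (ev h e₂ a)
  | .jn e₁ e₂ => fun a => join (ev h e₁ a) (ev h e₂ a)
  | .ap e => fun a => h (ev h e a)

open Tm in
/-- A finite list of terms sufficient to produce `tnn` or `tbb` from any
non-harmonious unary function. -/
def EL : List Tm :=
  [ jn (ng var) (jn var (ap var))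
  , jn (ng var) (jn var (ap ct))
  , jn (ng var) (jn var (ap cf))
  , jn var (ap var)
  , jn (ng var) (ap var)
  , jn (jn var (ng var)) (ng (ap var))
  , jn (ap var) (ng (ap var))
  , ap var
  , ap (ap var)
  , jn (mt var (ng var)) (ng (ap var))
  , ng (ap var) ]

set_option maxRecDepth 100000 in
lemma key : ∀ h : DM4 → DM4, (¬ ∀ a, h (conf a) = conf (h a)) →
    ∃ e ∈ EL, ev h e = tnn ∨ ev h e = tbb := by decide

section CloneLemmas

variable {C : ∀ k : ℕ, Set (DMFun k)}
    (hC : IsClone C) (hDMA : ∀ k g, InClone DMAGen k g → g ∈ C k)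

set_option linter.unusedSectionVars false

include hC hDMA

lemma meet_memC : toF2 meet ∈ C 1 :=
  hDMA 1 _ (InClone.base (Or.inl (Or.inl rfl)))

lemma join_memC : toF2 join ∈ C 1 :=
  hDMA 1 _ (InClone.base (Or.inl (Or.inr (Or.inl rfl))))

lemma neg_memC : toF1 neg ∈ C 0 :=
  hDMA 0 _ (InClone.base (Or.inr rfl))

lemma ct_memC : toF1 (fun _ => t) ∈ C 0 :=
  hDMA 0 _ (InClone.base (Or.inl (Or.inr (Or.inr (Or.inl rfl)))))

lemma cf_memC : toF1 (fun _ => f) ∈ C 0 :=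
  hDMA 0 _ (InClone.base (Or.inl (Or.inr (Or.inr (Or.inr rfl)))))

lemma id_memC : toF1 (fun a => a) ∈ C 0 := hC.proj 0 0

lemma comp_memC {w u : DM4 → DM4} (hw : toF1 w ∈ C 0) (hu : toF1 u ∈ C 0) :
    toF1 (fun a => w (u a)) ∈ C 0 :=
  hC.comp 0 0 (toF1 w) (fun _ => toF1 u) hw (fun _ => hu)

lemma bin_memC {w : DM4 → DM4 → DM4} (hw : toF2 w ∈ C 1) {u v : DM4 → DM4}
    (hu : toF1 u ∈ C 0) (hv : toF1 v ∈ C 0) :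
    toF1 (fun a => w (u a) (v a)) ∈ C 0 := by
  have h2 := hC.comp 0 1 (toF2 w) ![toF1 u, toF1 v] hw
    (by intro i; fin_cases i <;> assumption)
  have he : toF1 (fun a => w (u a) (v a)) =
      (fun x => toF2 w (fun i => ![toF1 u, toF1 v] i x)) := by
    funext x
    simp [toF1, toF2, Matrix.cons_val_zero, Matrix.cons_val_one, Matrix.head_cons]
  rw [he]; exact h2

lemma ev_memC {h : DM4 → DM4} (hh : toF1 h ∈ C 0) : ∀ e : Tm, toF1 (ev h e) ∈ C 0 := by
  intro e
  induction e with
  | var => exact id_memC hC hDMA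
  | ct => exact ct_memC hC hDMA
  | cf => exact cf_memC hC hDMA
  | ng e ih => simp only [ev]; exact comp_memC hC hDMA (neg_memC hC hDMA) ih
  | mt e₁ e₂ ih₁ ih₂ => simp only [ev]; exact bin_memC hC hDMA (meet_memC hC hDMA) ih₁ ih₂
  | jn e₁ e₂ ih₁ ih₂ => simp only [ev]; exact bin_memC hC hDMA (join_memC hC hDMA) ih₁ ih₂
  | ap e ih => simp only [ev]; exact comp_memC hC hDMA hh ih

end CloneLemmas

/-- A clone above DMA contains a unary non-harmonious function
iff it contains t_{n↦n} or t_{b↦b}. -/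
theorem unary_non_harmonious (C : ∀ k : ℕ, Set (DMFun k))
    (hC : IsClone C) (hDMA : ∀ k g, InClone DMAGen k g → g ∈ C k) :
    (∃ g ∈ C 0, ¬ Harmonious g) ↔ (toF1 tnn ∈ C 0 ∨ toF1 tbb ∈ C 0) := by
  constructor
  · rintro ⟨g, hg, hng⟩
    set h : DM4 → DM4 := fun a => g (fun _ => a) with hdef
    have hgx : ∀ x : Fin 1 → DM4, g x = h (x 0) := fun x =>
      congrArg g (funext fun i => by rw [Fin.eq_zero i])
    have hhC : toF1 h ∈ C 0 := by
      have he : toF1 h = g := by funext x; exact (hgx x).symm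
      rw [he]; exact hg
    have hnh : ¬ ∀ a, h (conf a) = conf (h a) := by
      intro hall
      apply hng
      intro x
      have h1 : g (fun i => conf (x i)) = h (conf (x 0)) := hgx _
      rw [h1, hall, hgx x]
    obtain ⟨e, _, heq⟩ := key h hnh
    have hm := ev_memC hC hDMA hhC e
    rcases heq with h1 | h1
    · rw [h1] at hm; exact Or.inl hm
    · rw [h1] at hm; exact Or.inr hm
  · rintro (h1 | h1)
    · exact ⟨toF1 tnn, h1, fun hh => absurd (hh fun _ => n) (by decide)⟩
    · exact ⟨toF1 tbb, h1, fun hh => absurd (hh fun _ => n) (by decide)⟩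


end DM4
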